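/- arXiv:2202.12621 — 2 statements merged into one kernel-verified Lean document; each statement's English description precedes it below -/
import Mathlib

section
/- Let G be a finite group and C a nonzero right ideal of F_2 G. Define C^{(1)} = C and C^{(t+1)} = C^{(t)} * C (Schur product). Then there is a subgroup H \leq G such that C \subseteq K_H^G and C^{(t)} = K_H^G for all sufficiently large t, where K_H^G denotes the right ideal (\sum_{h\in H} h)·F_2 G. -/
open MonoidAlgebra

attribute [local instance] Classical.propDecidable

/-- Coefficientwise (Schur) product on the group algebra. -/
noncomputable def schur {K G : Type*} [Semiring K] (f g : MonoidAlgebra K G) :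
    MonoidAlgebra K G :=
  MonoidAlgebra.ofCoeff (Finsupp.zipWith (· * ·) (mul_zero 0) f.coeff g.coeff)

/-- `C` is a right ideal of the group algebra. -/
def IsRightIdeal {K G : Type*} [Field K] [Group G]
    (C : Submodule K (MonoidAlgebra K G)) : Prop :=
  ∀ c ∈ C, ∀ v : MonoidAlgebra K G, c * v ∈ C

/-- Iterated Schur powers of a right ideal: `C^(1) = C`, `C^(t+1) = C^(t) * C`. -/
noncomputable def iterSchur {G : Type*} [Group G]
    (C : Submodule (ZMod 2) (MonoidAlgebra (ZMod 2) G)) :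
    ℕ → Submodule (ZMod 2) (MonoidAlgebra (ZMod 2) G)
  | 0 => C
  | t + 1 => Submodule.span (ZMod 2)
      {x : MonoidAlgebra (ZMod 2) G | ∃ a ∈ iterSchur C t, ∃ b ∈ C, x = schur a b}

/-!
Over `F₂` the Schur product is idempotent, `c * c = c`, so every product of `t` elements of `C`
is also a product of `t + 1` of them and the Schur powers of `C` form an increasing chain; in the
finite group algebra it stabilises at some `D`, which is then closed under the Schur product.
Such a nonzero right ideal `D` contains an element `e` with `e(1) = 1` of minimal support. Schur
multiplying any `f ∈ D` with `f(1) = 1` by `e` cannot shrink the support of `e`, so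
`supp e ⊆ supp f`; translating on the right, the support of every `f ∈ D` is a union of left
cosets of `H = supp e`, which is therefore a subgroup. Over `F₂` an element is determined by its
support, so `e = ∑_{h ∈ H} h` and `D = e · F₂G`.
-/
section SchurProduct

variable {K G : Type*}

@[simp]
lemma schur_coeff [Semiring K] (f g : MonoidAlgebra K G) (x : G) :
    (schur f g).coeff x = f.coeff x * g.coeff x :=
  Finsupp.zipWith_apply (hf := mul_zero 0)

lemma schur_assoc [Semiring K] (a b c : MonoidAlgebra K G) :
    schur (schur a b) c = schur a (schur b c) := by
  ext x; simp [mul_assoc]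

noncomputable def schurLeft [CommSemiring K] (a : MonoidAlgebra K G) :
    MonoidAlgebra K G →ₗ[K] MonoidAlgebra K G where
  toFun := schur a
  map_add' x y := by ext z; simp [mul_add]
  map_smul' r x := by ext z; simp [mul_left_comm]

lemma coeff_mul_of [Semiring K] [Group G] (f : MonoidAlgebra K G) (g x : G) :
    (f * of K G g).coeff x = f.coeff (x * g⁻¹) := by
  simp [of_apply]

lemma schur_mul_of [Semiring K] [Group G] (a b : MonoidAlgebra K G) (g : G) :
    schur a b * of K G g = schur (a * of K G g) (b * of K G g) := by
  ext x; simp only [coeff_mul_of, schur_coeff]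

lemma schur_self (f : MonoidAlgebra (ZMod 2) G) : schur f f = f := by
  ext x
  rw [schur_coeff]
  generalize f.coeff x = a
  revert a; decide

lemma coeff_eq_coeff_of_mem_support_iff {f f' : MonoidAlgebra (ZMod 2) G} {x y : G}
    (h : x ∈ f.coeff.support ↔ y ∈ f'.coeff.support) : f.coeff x = f'.coeff y := by
  simp only [Finsupp.mem_support_iff] at h
  generalize f.coeff x = a, f'.coeff y = b at h
  revert a b; decide

end SchurProduct

section SchurPowers

variable {G : Type*} [Group G] (C : Submodule (ZMod 2) (MonoidAlgebra (ZMod 2) G))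

lemma schur_mem_iterSchur_succ {t : ℕ} {a b : MonoidAlgebra (ZMod 2) G}
    (ha : a ∈ iterSchur C t) (hb : b ∈ C) : schur a b ∈ iterSchur C (t + 1) :=
  Submodule.subset_span ⟨a, ha, b, hb, rfl⟩

lemma iterSchur_succ_le {t : ℕ} {D : Submodule (ZMod 2) (MonoidAlgebra (ZMod 2) G)}
    (h : ∀ a ∈ iterSchur C t, ∀ b ∈ C, schur a b ∈ D) : iterSchur C (t + 1) ≤ D :=
  Submodule.span_le.2 <| by rintro _ ⟨a, ha, b, hb, rfl⟩; exact h a ha b hb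

lemma iterSchur_mono : Monotone (iterSchur C) := by
  refine monotone_nat_of_le_succ fun t => ?_
  cases t with
  | zero =>
    intro c hc
    rw [← schur_self c]
    exact schur_mem_iterSchur_succ C hc hc
  | succ t =>
    refine iterSchur_succ_le C fun a ha b hb => ?_
    rw [← schur_self b, ← schur_assoc]
    exact schur_mem_iterSchur_succ C (schur_mem_iterSchur_succ C ha hb) hb

lemma schur_mem_iterSchur {s t : ℕ} {a b : MonoidAlgebra (ZMod 2) G}
    (ha : a ∈ iterSchur C s) (hb : b ∈ iterSchur C t) : schur a b ∈ iterSchur C (s + t + 1) := by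
  induction t generalizing b with
  | zero => exact schur_mem_iterSchur_succ C ha hb
  | succ t ih =>
    refine Submodule.span_le.2 ?_ (Submodule.apply_mem_span_image_of_mem_span (schurLeft a) hb)
    rintro _ ⟨_, ⟨b', hb', c, hc, rfl⟩, rfl⟩
    change schur a (schur b' c) ∈ _
    rw [← schur_assoc]
    exact schur_mem_iterSchur_succ C (ih hb') hc

lemma exists_iterSchur_eventually_eq [Finite G] : ∃ N, ∀ t ≥ N, iterSchur C t = iterSchur C N :=
  (WellFoundedGT.monotone_chain_condition ⟨_, iterSchur_mono C⟩).imp fun _ h t ht => (h t ht).symm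

end SchurPowers

def IsSchurClosed {K G : Type*} [Semiring K] (D : Submodule K (MonoidAlgebra K G)) : Prop :=
  ∀ a ∈ D, ∀ b ∈ D, schur a b ∈ D

lemma IsSchurClosed.exists_support_subset {K G : Type*} [Semiring K] [One G]
    {D : Submodule K (MonoidAlgebra K G)} (hS : IsSchurClosed D) {f₀ : MonoidAlgebra K G}
    (hf₀ : f₀ ∈ D) (hf₀1 : f₀.coeff 1 = 1) :
    ∃ e ∈ D, e.coeff 1 = 1 ∧
      ∀ f ∈ D, f.coeff 1 = 1 → (e.coeff.support : Set G) ⊆ f.coeff.support := by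
  obtain ⟨e, ⟨heD, he1⟩, hmin⟩ :=
    (measure fun f : MonoidAlgebra K G => f.coeff.support.card).wf.has_min
      {f | f ∈ D ∧ f.coeff 1 = 1} ⟨f₀, hf₀, hf₀1⟩
  refine ⟨e, heD, he1, fun f hfD hf1 x hx => ?_⟩
  have hsub : (schur e f).coeff.support ⊆ e.coeff.support := fun y hy => by
    simp only [Finsupp.mem_support_iff, schur_coeff] at hy ⊢
    exact left_ne_zero_of_mul hy
  have heq : (schur e f).coeff.support = e.coeff.support :=
    Finset.eq_of_subset_of_card_le hsub <| not_lt.1 <|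
      hmin _ ⟨hS e heD f hfD, by rw [schur_coeff, he1, hf1, one_mul]⟩
  rw [Finset.mem_coe, ← heq, Finsupp.mem_support_iff, schur_coeff] at hx
  exact Finsupp.mem_support_iff.2 (right_ne_zero_of_mul hx)

section RightIdeal

variable {K G : Type*} [Field K] [Group G] {D : Submodule K (MonoidAlgebra K G)}

lemma IsRightIdeal.of_mul_of_mem (h : ∀ x ∈ D, ∀ g : G, x * of K G g ∈ D) : IsRightIdeal D := by
  intro c hc v
  induction v using MonoidAlgebra.induction_on with
  | of g => exact h c hc g
  | add x y hx hy => rw [mul_add]; exact D.add_mem hx hy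
  | smul r x hx => rw [mul_smul_comm]; exact D.smul_mem r hx

lemma coeff_one_mul_single_inv {f : MonoidAlgebra K G} {g : G} (hg : f.coeff g ≠ 0) :
    (f * single g⁻¹ (f.coeff g)⁻¹).coeff 1 = 1 := by
  rw [coeff_mul_single_apply, one_mul, inv_inv, mul_inv_cancel₀ hg]

lemma IsRightIdeal.exists_mem_coeff_one_eq_one (hI : IsRightIdeal D) (hD : D ≠ ⊥) :
    ∃ f ∈ D, f.coeff 1 = 1 := by
  obtain ⟨f, hfD, hf⟩ := Submodule.exists_mem_ne_zero_of_ne_bot hD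
  obtain ⟨g, hg⟩ := Finsupp.support_nonempty_iff.2 (coeff_eq_zero.not.2 hf)
  exact ⟨_, hI f hfD _, coeff_one_mul_single_inv (Finsupp.mem_support_iff.1 hg)⟩

lemma IsRightIdeal.mul_mem_support (hI : IsRightIdeal D) {S : Set G}
    (hS : ∀ f ∈ D, f.coeff 1 = 1 → S ⊆ f.coeff.support) {f : MonoidAlgebra K G} (hf : f ∈ D)
    {g x : G} (hg : g ∈ f.coeff.support) (hx : x ∈ S) : x * g ∈ f.coeff.support := by
  rw [Finsupp.mem_support_iff] at hg
  have := hS _ (hI f hf _) (coeff_one_mul_single_inv hg) hx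
  rw [Finset.mem_coe, Finsupp.mem_support_iff, coeff_mul_single_apply, inv_inv] at this
  exact Finsupp.mem_support_iff.2 (left_ne_zero_of_mul this)

lemma IsRightIdeal.mul_mem_support_iff (hI : IsRightIdeal D) {H : Subgroup G}
    (hH : ∀ f ∈ D, f.coeff 1 = 1 → (H : Set G) ⊆ f.coeff.support) {f : MonoidAlgebra K G}
    (hf : f ∈ D) {h : G} (hh : h ∈ H) (g : G) :
    h * g ∈ f.coeff.support ↔ g ∈ f.coeff.support := by
  refine ⟨fun hg => ?_, fun hg => hI.mul_mem_support hH hf hg hh⟩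
  simpa using hI.mul_mem_support hH hf hg (H.inv_mem hh)

end RightIdeal

lemma isRightIdeal_iterSchur {G : Type*} [Group G]
    {C : Submodule (ZMod 2) (MonoidAlgebra (ZMod 2) G)} (hI : IsRightIdeal C) (t : ℕ) :
    IsRightIdeal (iterSchur C t) := by
  induction t with
  | zero => exact hI
  | succ t ih =>
    refine .of_mul_of_mem fun x hx g => Submodule.span_le.2 ?_
      (Submodule.apply_mem_span_image_of_mem_span (LinearMap.mulRight (ZMod 2) (of _ G g)) hx)
    rintro _ ⟨_, ⟨a, ha, b, hb, rfl⟩, rfl⟩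
    change schur a b * of _ G g ∈ _
    rw [schur_mul_of]
    exact schur_mem_iterSchur_succ C (ih a ha _) (hI b hb _)

lemma Subgroup.coe_closure_of_mul_mem {G : Type*} [Group G] [Finite G] {S : Set G} (h1 : 1 ∈ S)
    (hmul : ∀ x ∈ S, ∀ y ∈ S, x * y ∈ S) : (closure S : Set G) = S :=
  congrArg ((↑) : Submonoid G → Set G) <| (closure_toSubmonoid_of_finite (s := S)).trans
    (Submonoid.closure_eq ⟨⟨S, fun {x y} hx hy => hmul x hx y hy⟩, h1⟩)

lemma coeff_sum_of_subgroup {K G : Type*} [Semiring K] [Group G] (H : Subgroup G) [Fintype H]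
    [DecidablePred (· ∈ H)] (x : G) :
    (∑ h : H, of K G h).coeff x = if x ∈ H then 1 else 0 := by
  rw [coeff_sum, Finsupp.finsetSum_apply]
  split_ifs with hx
  · rw [Finset.sum_eq_single_of_mem ⟨x, hx⟩ (Finset.mem_univ _)]
    · simp [of_apply]
    · rintro h - hne
      simp [of_apply, Subtype.ext_iff.not.1 hne]
  · exact Finset.sum_eq_zero fun h _ => by simp [of_apply, ne_of_mem_of_not_mem h.2 hx]

-- the preimage is `f` restricted to a set of representatives of the right cosets `H g`
lemma mem_range_mulLeft_of_coeff_mul_left_eq {K G : Type*} [CommSemiring K] [Group G] [Fintype G]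
    (H : Subgroup G) [Fintype H] {f : MonoidAlgebra K G}
    (hf : ∀ h ∈ H, ∀ g, f.coeff (h * g) = f.coeff g) :
    f ∈ LinearMap.range (LinearMap.mulLeft K (∑ h : H, of K G h)) := by
  let s := QuotientGroup.rightRel H
  refine ⟨∑ q : Quotient s, single q.out (f.coeff q.out), ?_⟩
  have hmem (q : Quotient s) (x : G) : x * q.out⁻¹ ∈ H ↔ q = ⟦x⟧ := by
    rw [← QuotientGroup.rightRel_apply, ← Quotient.eq, Quotient.out_eq]
  ext x
  rw [LinearMap.mulLeft_apply, Finset.mul_sum, coeff_sum, Finsupp.finsetSum_apply]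
  simp_rw [coeff_mul_single_apply, coeff_sum_of_subgroup, hmem, ite_mul, one_mul, zero_mul,
    Finset.sum_ite_eq', Finset.mem_univ, if_true]
  rw [← hf _ (QuotientGroup.rightRel_apply.1 (Quotient.mk_out (s := s) x)), inv_mul_cancel_right]

/-- The right ideal `K_H^G = (∑_{h ∈ H} h)·F₂G`. -/
noncomputable def subgroupIdeal {G : Type*} [Group G] [Fintype G] (H : Subgroup G) :
    Submodule (ZMod 2) (MonoidAlgebra (ZMod 2) G) :=
  LinearMap.range (LinearMap.mulLeft (ZMod 2) (∑ h : H, MonoidAlgebra.of (ZMod 2) G (h : G)))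

theorem IsRightIdeal.exists_eq_subgroupIdeal {G : Type*} [Group G] [Fintype G]
    {D : Submodule (ZMod 2) (MonoidAlgebra (ZMod 2) G)} (hI : IsRightIdeal D)
    (hS : IsSchurClosed D) (hD : D ≠ ⊥) : ∃ H : Subgroup G, D = subgroupIdeal H := by
  obtain ⟨f₀, hf₀, hf₀1⟩ := hI.exists_mem_coeff_one_eq_one hD
  obtain ⟨e, heD, he1, he⟩ := hS.exists_support_subset hf₀ hf₀1
  set H := Subgroup.closure (e.coeff.support : Set G)
  have hH : (H : Set G) = e.coeff.support :=
    Subgroup.coe_closure_of_mul_mem (Finsupp.mem_support_iff.2 (he1 ▸ one_ne_zero))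
      fun x hx y hy => hI.mul_mem_support he heD hy hx
  rw [← hH] at he
  have he_sum : e = ∑ h : H, of (ZMod 2) G h := by
    ext x
    refine coeff_eq_coeff_of_mem_support_iff ?_
    rw [← Finset.mem_coe, ← hH, Finsupp.mem_support_iff, coeff_sum_of_subgroup]
    simp
  refine ⟨H, le_antisymm (fun f hf => ?_) ?_⟩
  · exact mem_range_mulLeft_of_coeff_mul_left_eq H fun h hh g =>
      coeff_eq_coeff_of_mem_support_iff (hI.mul_mem_support_iff he hf hh g)
  · rintro _ ⟨v, rfl⟩
    rw [LinearMap.mulLeft_apply, ← he_sum]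
    exact hI e heD v

/-- Over `F₂`, the Schur powers of a nonzero right ideal eventually stabilize at
`K_H^G = (∑_{h ∈ H} h)·F₂G` for a subgroup `H ≤ G` containing `C`. -/
theorem stmt14 {G : Type*} [Group G] [Fintype G]
    (C : Submodule (ZMod 2) (MonoidAlgebra (ZMod 2) G)) (hI : IsRightIdeal C)
    (hC : C ≠ ⊥) :
    ∃ (H : Subgroup G) (N : ℕ),
      C ≤ LinearMap.range (LinearMap.mulLeft (ZMod 2)
        (∑ h : H, MonoidAlgebra.of (ZMod 2) G (h : G))) ∧
      ∀ t ≥ N, iterSchur C t = LinearMap.range (LinearMap.mulLeft (ZMod 2)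
        (∑ h : H, MonoidAlgebra.of (ZMod 2) G (h : G))) := by
  obtain ⟨N, hN⟩ := exists_iterSchur_eventually_eq C
  have hS : IsSchurClosed (iterSchur C N) := fun a ha b hb =>
    hN (N + N + 1) (by omega) ▸ schur_mem_iterSchur C ha hb
  have hCN : C ≤ iterSchur C N := iterSchur_mono C (Nat.zero_le N)
  obtain ⟨H, hH⟩ := (isRightIdeal_iterSchur hI N).exists_eq_subgroupIdeal hS
    (ne_bot_of_le_ne_bot hC hCN)
  exact ⟨H, N, hCN.trans hH.le, fun t ht => (hN t ht).trans hH⟩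
end

section
/- Let p be a prime, K a field of characteristic p, G a finite p-group, and C a right ideal of KG. If dim_K(C) < (\sqrt{8|G| + 1} - 1)/2, then C is self-orthogonal, i.e., \langle c, c' \rangle = 0 for all c, c' \in C. -/
/-!
Let `C * C` be the span of the coordinatewise products of elements of `C`. It is a subspace of
dimension at most `binom(dim C + 1, 2) < |G|` which, like `C`, is stable under right translation
by `G`. Its annihilator in the dual of `KG` is then a nonzero subspace, stable under the action
of `G` by precomposition with right translations. A `p`-group acting on a vector space in
characteristic `p` fixes a nonzero vector of every nonzero stable subspace (the `𝔽_p`-span of an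
orbit is finite, and its fixed points are counted mod `p`), so the annihilator contains a nonzero
`G`-invariant functional; taking the same value on every `g`, it is a nonzero multiple of the
augmentation `x ↦ ∑ g, x g`. Hence every element of `C * C` has coefficient sum zero, and
the coefficient sum of the product of `c` and `c'` is `⟨c, c'⟩`.
-/

open MonoidAlgebra

attribute [local instance] Classical.propDecidable

theorem IsPGroup.exists_ne_zero_mem_fixedPoints {p : ℕ} [Fact p.Prime] {G V : Type*} [Group G]
    [Finite G] (hG : IsPGroup p G) [AddCommGroup V] [DistribMulAction G V]
    (hV : ∀ x : V, p • x = 0) {W : AddSubgroup V} (hW : ∀ g : G, ∀ x ∈ W, g • x ∈ W)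
    {v : V} (hvW : v ∈ W) (hv : v ≠ 0) :
    ∃ w ∈ W, w ≠ 0 ∧ w ∈ MulAction.fixedPoints G V := by
  -- `have`, not `let`: unfolding `zmodModule` leaves instance search stuck on a match on `p`.
  have : Module (ZMod p) V := AddCommGroup.zmodModule hV
  let orbit := Set.range fun g : G => g • v
  let T : Submodule (ZMod p) V := Submodule.span (ZMod p) orbit
  have hvT : v ∈ T := Submodule.subset_span (s := orbit) ⟨1, one_smul G v⟩
  have hTW : T ≤ AddSubgroup.toZModSubmodule p W :=
    Submodule.span_le.2 (Set.range_subset_iff.2 fun g => hW g v hvW)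
  let A : SubMulAction G V :=
    { carrier := T
      smul_mem' := fun g x hx => by
        induction hx using Submodule.span_induction with
        | mem x hx =>
          obtain ⟨h, rfl⟩ := hx
          exact Submodule.subset_span (s := orbit) ⟨g * h, mul_smul g h v⟩
        | zero => rw [smul_zero]; exact T.zero_mem
        | add x y _ _ hx hy => rw [smul_add]; exact T.add_mem hx hy
        | smul c x _ hx =>
          rw [← DistribMulAction.toAddMonoidHom_apply, ZMod.map_smul]; exact T.smul_mem c hx }
  have : Module.Finite (ZMod p) T := Module.Finite.span_of_finite _ (Set.finite_range _)
  have : Finite A := Module.finite_of_finite (ZMod p) (M := T)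
  have hcard : p ∣ Nat.card A := by
    have hord : addOrderOf (⟨v, hvT⟩ : T) = p :=
      addOrderOf_eq_prime (Subtype.ext (hV v)) (fun h => hv (congrArg Subtype.val h))
    exact hord ▸ addOrderOf_dvd_natCard (⟨v, hvT⟩ : T)
  obtain ⟨w, hw, hw0⟩ := hG.exists_fixed_point_of_prime_dvd_card_of_fixed_point A hcard
    (a := ⟨0, T.zero_mem⟩) (fun g => Subtype.ext (smul_zero g))
  exact ⟨w, hTW w.2, fun h => hw0 (Subtype.ext h.symm), fun g => congrArg Subtype.val (hw g)⟩

theorem Submodule.finrank_map₂_self_le_choose {K M N : Type*} [Field K] [AddCommGroup M]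
    [Module K M] [AddCommGroup N] [Module K N] (f : M →ₗ[K] M →ₗ[K] N)
    (hf : ∀ x y, f x y = f y x) (C : Submodule K M) [FiniteDimensional K C] :
    Module.finrank K (map₂ f C C) ≤ (Module.finrank K C + 1).choose 2 := by
  let b := Module.finBasis K C
  let F : Sym2 (Fin (Module.finrank K C)) → N :=
    Sym2.lift ⟨fun i j => f (b i) (b j), fun i j => hf _ _⟩
  let S := span K (Set.range F)
  have : FiniteDimensional K S := FiniteDimensional.span_of_finite K (Set.finite_range F)
  have hCS : (f.compl₁₂ C.subtype C.subtype).compr₂ S.mkQ = 0 :=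
    b.ext fun i => b.ext fun j => (Quotient.mk_eq_zero S).2 (subset_span ⟨s(i, j), rfl⟩)
  have hle : map₂ f C C ≤ S := map₂_le.2 fun m hm n hn =>
    (Quotient.mk_eq_zero S).1 (LinearMap.congr_fun₂ hCS ⟨m, hm⟩ ⟨n, hn⟩)
  calc Module.finrank K (map₂ f C C) ≤ Module.finrank K S := finrank_mono hle
    _ ≤ Fintype.card (Sym2 (Fin (Module.finrank K C))) := finrank_range_le_card F
    _ = (Module.finrank K C + 1).choose 2 := by rw [Sym2.card, Fintype.card_fin]

theorem Nat.choose_two_lt_of_lt_sqrt {d n : ℕ} (h : (d : ℝ) < (√(8 * n + 1) - 1) / 2) :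
    (d + 1).choose 2 < n := by
  have hsqrt : (2 * d + 1 : ℝ) < √(8 * n + 1) := by linarith
  have hsq : (2 * d + 1 : ℝ) ^ 2 < 8 * n + 1 := (Real.lt_sqrt (by positivity)).1 hsqrt
  have hprod : (d + 1) * d < 2 * n := by exact_mod_cast (by nlinarith : ((d : ℝ) + 1) * d < 2 * n)
  rw [Nat.choose_two_right, Nat.add_sub_cancel]
  omega

section Schur

variable {K G : Type*}

@[simp]
lemma coeff_schur [Semiring K] (f f' : MonoidAlgebra K G) (g : G) :
    (schur f f').coeff g = f.coeff g * f'.coeff g := rfl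

lemma schur_comm [CommSemiring K] (f f' : MonoidAlgebra K G) : schur f f' = schur f' f := by
  ext g; exact mul_comm _ _

lemma schur_mul_single [Semiring K] [Group G] (f f' : MonoidAlgebra K G) (g : G) :
    schur f f' * single g 1 = schur (f * single g 1) (f' * single g 1) := by
  ext h; simp [coeff_mul_single_apply]

variable (K G) in
noncomputable def schurBilin [CommSemiring K] :
    MonoidAlgebra K G →ₗ[K] MonoidAlgebra K G →ₗ[K] MonoidAlgebra K G :=
  LinearMap.mk₂ K schur
    (fun _ _ _ => by ext; simp [add_mul])
    (fun _ _ _ => by ext; simp [mul_assoc])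
    (fun _ _ _ => by ext; simp [mul_add])
    (fun _ _ _ => by ext; simp [mul_left_comm])

noncomputable def schurSquare [CommSemiring K] (C : Submodule K (MonoidAlgebra K G)) :
    Submodule K (MonoidAlgebra K G) :=
  Submodule.map₂ (schurBilin K G) C C

lemma schur_mem_schurSquare [CommSemiring K] {C : Submodule K (MonoidAlgebra K G)}
    {c c' : MonoidAlgebra K G} (hc : c ∈ C) (hc' : c' ∈ C) : schur c c' ∈ schurSquare C :=
  Submodule.apply_mem_map₂ _ hc hc'

lemma finrank_schurSquare_le [Field K] (C : Submodule K (MonoidAlgebra K G))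
    [FiniteDimensional K C] :
    Module.finrank K (schurSquare C) ≤ (Module.finrank K C + 1).choose 2 :=
  Submodule.finrank_map₂_self_le_choose _ schur_comm C

end Schur

section RightTranslation

variable {K G : Type*}

def IsRightTranslationInvariant [Semiring K] [Monoid G] (D : Submodule K (MonoidAlgebra K G)) :
    Prop :=
  ∀ x ∈ D, ∀ g : G, x * single g 1 ∈ D

lemma IsRightIdeal.isRightTranslationInvariant [Field K] [Group G]
    {C : Submodule K (MonoidAlgebra K G)} (hC : IsRightIdeal C) : IsRightTranslationInvariant C :=
  fun x hx _ => hC x hx _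

lemma IsRightTranslationInvariant.schurSquare [CommSemiring K] [Group G]
    {C : Submodule K (MonoidAlgebra K G)} (hC : IsRightTranslationInvariant C) :
    IsRightTranslationInvariant (_root_.schurSquare C) := by
  intro x hx g
  have hle : _root_.schurSquare C ≤
      (_root_.schurSquare C).comap (LinearMap.mulRight K (single g 1)) :=
    Submodule.map₂_le.2 fun a ha b hb => by
      simpa only [Submodule.mem_comap, LinearMap.mulRight_apply, schurBilin, LinearMap.mk₂_apply,
        schur_mul_single] using schur_mem_schurSquare (hC a ha g) (hC b hb g)
  exact hle hx

variable (K G) in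
noncomputable abbrev dualRightTranslation [CommSemiring K] [Monoid G] :
    DistribMulAction G (Module.Dual K (MonoidAlgebra K G)) where
  smul g φ := φ ∘ₗ LinearMap.mulRight K (single g 1)
  one_smul φ := LinearMap.ext fun x => show φ (x * single 1 1) = φ x by rw [← one_def, mul_one]
  mul_smul g h φ := LinearMap.ext fun x =>
    show φ (x * single (g * h) 1) = φ (x * single g 1 * single h 1) by
      rw [mul_assoc, single_mul_single, one_mul]
  smul_zero _ := rfl
  smul_add _ _ _ := rfl

lemma Module.Dual.eq_mul_sum_coeff [CommSemiring K] [Monoid G] [Fintype G]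
    {φ : Module.Dual K (MonoidAlgebra K G)} (hφ : ∀ x g, φ (x * single g 1) = φ x)
    (x : MonoidAlgebra K G) : φ x = φ 1 * ∑ g, x.coeff g := by
  have hsingle : ∀ g, φ (single g 1) = φ 1 := fun g => by simpa [← one_def] using hφ 1 g
  conv_lhs => rw [← (MonoidAlgebra.basis G K).sum_repr x]
  simp only [map_sum, map_smul, basis_apply, hsingle, smul_eq_mul, Finset.mul_sum]
  exact Fintype.sum_congr _ _ fun g => mul_comm _ _

theorem IsRightTranslationInvariant.sum_coeff_eq_zero [Field K] [Group G] [Fintype G] {p : ℕ}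
    [Fact p.Prime] [CharP K p] (hG : IsPGroup p G) {D : Submodule K (MonoidAlgebra K G)}
    (hD : IsRightTranslationInvariant D) (hDtop : D ≠ ⊤) {x : MonoidAlgebra K G}
    (hx : x ∈ D) : ∑ g, x.coeff g = 0 := by
  let _ := dualRightTranslation K G
  let W := D.dualAnnihilator.toAddSubgroup
  obtain ⟨φ, hφW, hφ0⟩ :=
    (Submodule.ne_bot_iff _).1 (mt Submodule.dualAnnihilator_eq_bot_iff.1 hDtop)
  have hW : ∀ g : G, ∀ ψ ∈ W, g • ψ ∈ W := fun g ψ hψ =>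
    (Submodule.mem_dualAnnihilator _).2 fun y hy =>
      (Submodule.mem_dualAnnihilator _).1 hψ _ (hD y hy g)
  have hp : ∀ ψ : Module.Dual K (MonoidAlgebra K G), p • ψ = 0 := fun ψ => by
    rw [← Nat.cast_smul_eq_nsmul K, CharP.cast_eq_zero, zero_smul]
  obtain ⟨ψ, hψW, hψ0, hψfix⟩ := hG.exists_ne_zero_mem_fixedPoints hp hW hφW hφ0
  have hψ := Module.Dual.eq_mul_sum_coeff fun y g => LinearMap.congr_fun (hψfix g) y
  have hψ1 : ψ 1 ≠ 0 := fun h => hψ0 (LinearMap.ext fun y => by simp [hψ y, h])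
  have hψx := (Submodule.mem_dualAnnihilator _).1 hψW x hx
  rw [hψ] at hψx
  exact (mul_eq_zero.1 hψx).resolve_left hψ1

end RightTranslation

/-- For a `p`-group `G` in characteristic `p`: if
`dim C < (√(8|G| + 1) - 1)/2`, then `C` is self-orthogonal. -/
theorem stmt19 {K G : Type*} [Field K] [Group G] [Fintype G]
    (p : ℕ) [Fact p.Prime] [CharP K p] (hG : IsPGroup p G)
    (C : Submodule K (MonoidAlgebra K G)) (hI : IsRightIdeal C)
    (hdim : (Module.finrank K ↥C : ℝ) <
      (Real.sqrt (8 * Fintype.card G + 1) - 1) / 2) :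
    ∀ c ∈ C, ∀ c' ∈ C, ∑ g : G, c.coeff g * c'.coeff g = 0 := by
  intro c hc c' hc'
  have hdimD : Module.finrank K (schurSquare C) < Fintype.card G :=
    (finrank_schurSquare_le C).trans_lt (Nat.choose_two_lt_of_lt_sqrt hdim)
  have hDtop : schurSquare C ≠ ⊤ := by
    intro h
    rw [h, finrank_top, Module.finrank_eq_card_basis (MonoidAlgebra.basis G K)] at hdimD
    exact lt_irrefl _ hdimD
  simpa only [coeff_schur] using
    hI.isRightTranslationInvariant.schurSquare.sum_coeff_eq_zero hG hDtop
    (schur_mem_schurSquare hc hc')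
end
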